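/- Define the sequence $t_0 = t > 0$ and $t_k = \frac{1}{2(n-1)}\ln\left(\frac{e^{2(n-1)t_{k-1}}+1}{2}\right)$ for $k \ge 1$, with $n \ge 2$. Then for all $k \ge 1$: (i) $e^{2(n-1)t_k} - 1 = \frac{e^{2(n-1)t_{k-1}}-1}{2}$; (ii) $t_k < \frac{3}{4}t_{k-1}$ provided $t \le \frac{1}{2(n-1)}\ln(3/2)$; (iii) $\sum_{i=0}^\infty t_i < 4t$. -/

import Mathlib

/-!
With `c = 2(n-1)` and `x_k = e^{c t_k}`, the recursion is the affine map `x_{k+1} = (x_k + 1)/2`,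
which is (i). Since `1 < x_0 ≤ 3/2`, all `x_k` stay in `(1, 3/2]`, and there
`((x+1)/2)^4 < x^3`, i.e. `c t_{k+1} = log((x_k+1)/2) < (3/4) log x_k = (3/4) c t_k`, which is (ii).
Comparing with the geometric series `∑ t (3/4)^k = 4t` gives (iii).
-/

open Real

lemma half_add_one_pow_four_lt_pow_three {x : ℝ} (hx₁ : 1 < x) (hx : x ≤ 11) :
    ((x + 1) / 2) ^ 4 < x ^ 3 := by
  -- `16 x^3 - (x+1)^4 = (x - 1)(x^2 (11 - x) + 5x + 1)`
  have hfactor : 0 < (x - 1) * (x ^ 2 * (11 - x) + 5 * x + 1) :=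
    mul_pos (by linarith) (by nlinarith [mul_nonneg (sq_nonneg x) (sub_nonneg.2 hx)])
  nlinarith

lemma log_half_add_one_lt {x : ℝ} (hx₁ : 1 < x) (hx : x ≤ 11) :
    log ((x + 1) / 2) < 3 / 4 * log x := by
  have h := log_lt_log (by positivity) (half_add_one_pow_four_lt_pow_three hx₁ hx)
  rw [log_pow, log_pow] at h
  push_cast at h
  linarith

lemma one_lt_and_le_of_succ_eq_half_add_one {x : ℕ → ℝ} (hx : ∀ k, x (k + 1) = (x k + 1) / 2)
    (hx₀ : 1 < x 0) (k : ℕ) : 1 < x k ∧ x k ≤ x 0 := by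
  have hgt : ∀ k, 1 < x k := by
    intro k
    induction k with
    | zero => exact hx₀
    | succ k ih => rw [hx]; linarith
  have hanti : Antitone x := antitone_nat_of_succ_le fun k => by rw [hx]; linarith [hgt k]
  exact ⟨hgt k, hanti (Nat.zero_le k)⟩

lemma tsum_lt_of_succ_lt_mul {a : ℕ → ℝ} {r : ℝ} (ha : ∀ k, 0 ≤ a k) (hr : r < 1)
    (h : ∀ k, a (k + 1) < r * a k) : ∑' k, a k < a 0 * (1 - r)⁻¹ := by
  have hr₀ : 0 ≤ r := by nlinarith [ha 0, ha 1, h 0]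
  have hle : ∀ k, a k ≤ a 0 * r ^ k := by
    intro k
    induction k with
    | zero => simp
    | succ k ih =>
      calc a (k + 1) ≤ r * a k := (h k).le
        _ ≤ r * (a 0 * r ^ k) := mul_le_mul_of_nonneg_left ih hr₀
        _ = a 0 * r ^ (k + 1) := by ring
  have hgeom : Summable fun k => a 0 * r ^ k :=
    (summable_geometric_of_lt_one hr₀ hr).mul_left _
  calc ∑' k, a k < ∑' k, a 0 * r ^ k :=
        Summable.tsum_lt_tsum (i := 1) hle (by simpa [mul_comm] using h 0)
          (hgeom.of_nonneg_of_le ha hle) hgeom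
    _ = a 0 * (1 - r)⁻¹ := by rw [tsum_mul_left, tsum_geometric_of_lt_one hr₀ hr]

theorem stmt_11_general (n : ℕ) (t : ℝ) (ht : 0 < t)
    (htle : t ≤ Real.log (3/2) / (2*((n:ℝ)-1)))
    (ts : ℕ → ℝ) (h0 : ts 0 = t)
    (hrec : ∀ k : ℕ,
      ts (k+1) = Real.log ((Real.exp (2*((n:ℝ)-1)*ts k) + 1)/2) / (2*((n:ℝ)-1))) :
    (∀ k : ℕ, Real.exp (2*((n:ℝ)-1)*ts (k+1)) - 1
        = (Real.exp (2*((n:ℝ)-1)*ts k) - 1)/2)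
    ∧ (∀ k : ℕ, ts (k+1) < (3/4) * ts k)
    ∧ (∑' i : ℕ, ts i) < 4*t := by
  set c : ℝ := 2 * ((n : ℝ) - 1)
  have hc : 0 < c := (div_pos_iff_of_pos_left (log_pos (by norm_num))).1 (ht.trans_le htle)
  set x : ℕ → ℝ := fun k => exp (c * ts k)
  have hts : ∀ k, ts k = log (x k) / c := fun k => by
    rw [log_exp, mul_div_cancel_left₀ _ hc.ne']
  have hx : ∀ k, x (k + 1) = (x k + 1) / 2 := fun k => by
    simp only [x, hrec k, mul_div_cancel₀ _ hc.ne', exp_log (by positivity : 0 < (x k + 1) / 2)]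
  have hx₀ : 1 < x 0 ∧ x 0 ≤ 3 / 2 := by
    refine ⟨one_lt_exp_iff.2 (by rw [h0]; positivity), ?_⟩
    calc x 0 ≤ exp (log (3 / 2)) := exp_le_exp.2 (by rw [h0]; exact (le_div_iff₀' hc).1 htle)
      _ = 3 / 2 := exp_log (by norm_num)
  have hii : ∀ k, ts (k + 1) < 3 / 4 * ts k := fun k => by
    obtain ⟨hgt, hle⟩ := one_lt_and_le_of_succ_eq_half_add_one hx hx₀.1 k
    rw [hts, hts, hx, ← mul_div_assoc]
    exact div_lt_div_of_pos_right (log_half_add_one_lt hgt (by linarith)) hc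
  refine ⟨fun k => by simp only [x] at hx; rw [hx k]; ring, hii, ?_⟩
  have hnonneg : ∀ k, 0 ≤ ts k := fun k => by
    rw [hts]
    exact div_nonneg (log_nonneg (one_lt_and_le_of_succ_eq_half_add_one hx hx₀.1 k).1.le) hc.le
  calc ∑' i, ts i < ts 0 * (1 - 3 / 4)⁻¹ := tsum_lt_of_succ_lt_mul hnonneg (by norm_num) hii
    _ = 4 * t := by rw [h0]; norm_num; ring

/-- The iteration times `t₀ = t`, `t_k = (2(n-1))⁻¹ log((e^{2(n-1)t_{k-1}}+1)/2)` satisfy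
(i) `e^{2(n-1)t_k} - 1 = (e^{2(n-1)t_{k-1}} - 1)/2`;
(ii) `t_k < (3/4) t_{k-1}` provided `t ≤ (2(n-1))⁻¹ log(3/2)`;
(iii) `∑ᵢ tᵢ < 4t`. -/
theorem stmt_11 (n : ℕ) (hn : 2 ≤ n) (t : ℝ) (ht : 0 < t)
    (htle : t ≤ Real.log (3/2) / (2*((n:ℝ)-1)))
    (ts : ℕ → ℝ) (h0 : ts 0 = t)
    (hrec : ∀ k : ℕ,
      ts (k+1) = Real.log ((Real.exp (2*((n:ℝ)-1)*ts k) + 1)/2) / (2*((n:ℝ)-1))) :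
    (∀ k : ℕ, Real.exp (2*((n:ℝ)-1)*ts (k+1)) - 1
        = (Real.exp (2*((n:ℝ)-1)*ts k) - 1)/2)
    ∧ (∀ k : ℕ, ts (k+1) < (3/4) * ts k)
    ∧ (∑' i : ℕ, ts i) < 4*t :=
  stmt_11_general n t ht htle ts h0 hrec
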